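/- arXiv:2006.12175 — 6 statements merged into one kernel-verified Lean document; each statement's English description precedes it below -/
import Mathlib

section
/- Let S be a semigroup and s : ℕ → S a sequence whose image generates S as a semigroup. Then every submultiplicative seminorm on the semigroup algebra ℂS is dominated by a seminorm of the form ‖·‖_F: for every seminorm p on ℂS satisfying p(ab) ≤ p(a)p(b) for all a, b ∈ ℂS, there exists a function F : ℕ → [0,∞) such that p(a) ≤ ‖a‖_F for all a ∈ ℂS. (In particular, one may take F(n) = |log p(δ_{s_n})| whenever p(δ_{s_n}) > 0, which yields p(δ_t) ≤ e^{ℓ_F(t)} for every t ∈ S.) -/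
/-- The product `s n₀ * s n₁ * ⋯ * s nₘ` of a nonempty word `n₀ :: L` in the
generators `s : ℕ → S`. -/
def wordProd {S : Type*} [Semigroup S] (s : ℕ → S) (n : ℕ) : List ℕ → S
  | [] => s n
  | m :: L => s n * wordProd s m L

/-- The cost `F n₀ + F n₁ + ⋯ + F nₘ` of a nonempty word `n₀ :: L`. -/
def wordCost (F : ℕ → ℝ) (n : ℕ) (L : List ℕ) : ℝ :=
  F n + (L.map F).sum

/-- `ℓ_F(t) = inf { F n₁ + ⋯ + F nₘ : m ≥ 1, t = s n₁ ⋯ s nₘ }`. -/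
noncomputable def lenF {S : Type*} [Semigroup S] (s : ℕ → S) (F : ℕ → ℝ) (t : S) : ℝ :=
  sInf { r : ℝ | ∃ n L, t = wordProd s n L ∧ r = wordCost F n L }

/-- `‖a‖_F = Σ_t |a_t| e^{ℓ_F(t)}` on the semigroup algebra `ℂS`. -/
noncomputable def normF {S : Type*} [Semigroup S] (s : ℕ → S) (F : ℕ → ℝ)
    (a : MonoidAlgebra ℂ S) : ℝ :=
  Finsupp.sum a.coeff fun t c => ‖c‖ * Real.exp (lenF s F t)

/-!
A nonnegative submultiplicative function `φ` on `S` with `φ (s n) ≤ exp (F n)` satisfies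
`φ (wordProd s n L) ≤ exp (wordCost F n L)` along every word, hence `φ t ≤ exp (ℓ_F t)` after
taking the infimum over the words representing `t`. Apply this to `φ t = p δ_t` with
`F n = |log p δ_{s n}|`; the triangle inequality of `p` on `a = Σ a_t δ_t` then gives
`p a ≤ Σ |a_t| p δ_t ≤ ‖a‖_F`.
-/

open Real MonoidAlgebra

section Words

variable {S : Type*} [Semigroup S] (s : ℕ → S) (F : ℕ → ℝ) {φ : S → ℝ}

theorem le_exp_wordCost (hφ : ∀ t, 0 ≤ φ t) (hmul : ∀ x y, φ (x * y) ≤ φ x * φ y)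
    (hs : ∀ n, φ (s n) ≤ exp (F n)) (n : ℕ) (L : List ℕ) :
    φ (wordProd s n L) ≤ exp (wordCost F n L) := by
  induction L generalizing n with
  | nil => simpa [wordProd, wordCost] using hs n
  | cons m L ih =>
    calc φ (wordProd s n (m :: L)) ≤ φ (s n) * φ (wordProd s m L) := hmul _ _
      _ ≤ exp (F n) * exp (wordCost F m L) := mul_le_mul (hs n) (ih m) (hφ _) (exp_pos _).le
      _ = exp (wordCost F n (m :: L)) := by
        rw [← exp_add]
        simp only [wordCost, List.map_cons, List.sum_cons]

theorem le_exp_lenF (hφ : ∀ t, 0 ≤ φ t) (hmul : ∀ x y, φ (x * y) ≤ φ x * φ y)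
    (hs : ∀ n, φ (s n) ≤ exp (F n)) {t : S} (ht : ∃ n L, t = wordProd s n L) :
    φ t ≤ exp (lenF s F t) := by
  obtain ⟨n, L, htnL⟩ := ht
  rcases (hφ t).eq_or_lt with h | h
  · rw [← h]
    exact (exp_pos _).le
  · rw [← log_le_iff_le_exp h]
    refine le_csInf ⟨_, n, L, htnL, rfl⟩ ?_
    rintro _ ⟨m, M, rfl, rfl⟩
    rw [log_le_iff_le_exp h]
    exact le_exp_wordCost s F hφ hmul hs m M

end Words

theorem Seminorm.le_sum_norm_coeff_mul {𝕜 M : Type*} [NormedField 𝕜]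
    (q : Seminorm 𝕜 (MonoidAlgebra 𝕜 M)) (a : MonoidAlgebra 𝕜 M) :
    q a ≤ a.coeff.sum fun t c => ‖c‖ * q (single t 1) := by
  calc q a = q (a.coeff.sum single) := by rw [sum_coeff_single]
    _ ≤ a.coeff.sum fun t c => q (single t c) :=
      Finset.le_sum_of_subadditive q (map_zero q).le (map_add_le_add q) _ _
    _ = a.coeff.sum fun t c => ‖c‖ * q (single t 1) := by
      refine Finset.sum_congr rfl fun t _ => ?_
      change q (single t (a.coeff t)) = ‖a.coeff t‖ * q (single t 1)
      rw [← map_smul_eq_mul, smul_single', mul_one]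

/-- Every submultiplicative seminorm `p` on the semigroup algebra `ℂS` is dominated
by a seminorm of the form `‖·‖_F`. -/
theorem seminorm_le_normF {S : Type*} [Semigroup S] (s : ℕ → S)
    (hgen : ∀ t : S, ∃ n L, t = wordProd s n L)
    (p : MonoidAlgebra ℂ S → ℝ)
    (hhom : ∀ (c : ℂ) (a : MonoidAlgebra ℂ S), p (c • a) = ‖c‖ * p a)
    (htri : ∀ a b : MonoidAlgebra ℂ S, p (a + b) ≤ p a + p b)
    (hsub : ∀ a b : MonoidAlgebra ℂ S, p (a * b) ≤ p a * p b) :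
    ∃ F : ℕ → ℝ, (∀ n, 0 ≤ F n) ∧ ∀ a : MonoidAlgebra ℂ S, p a ≤ normF s F a := by
  let q : Seminorm ℂ (MonoidAlgebra ℂ S) := Seminorm.of p htri hhom
  let φ : S → ℝ := fun t => p (single t 1)
  let F : ℕ → ℝ := fun n => |log (φ (s n))|
  have hφ : ∀ t, 0 ≤ φ t := fun t => apply_nonneg q _
  have hmul : ∀ x y, φ (x * y) ≤ φ x * φ y := fun x y => by
    simpa only [φ, single_mul_single, mul_one] using hsub (single x 1) (single y 1)
  have hs : ∀ n, φ (s n) ≤ exp (F n) := fun n =>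
    (le_exp_log _).trans (exp_le_exp.2 (le_abs_self _))
  refine ⟨F, fun n => abs_nonneg _, fun a => ?_⟩
  calc p a = q a := rfl
    _ ≤ a.coeff.sum fun t c => ‖c‖ * φ t := q.le_sum_norm_coeff_mul a
    _ ≤ normF s F a := Finset.sum_le_sum fun t _ =>
      mul_le_mul_of_nonneg_left (le_exp_lenF s F hφ hmul hs (hgen t)) (norm_nonneg _)
end

section
/- Let S be a semigroup and s : ℕ → S a sequence whose image generates S as a semigroup, and suppose that for each n ≥ 1 the element s_n does not lie in the subsemigroup of S generated by {s_1, …, s_{n−1}}. Then for any sequence (C_n) of nonnegative real numbers there exists a function F : ℕ → [0,∞) such that ℓ_F(s_n) > C_n for every n ≥ 1. -/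
/-- A word all of whose letters are `< n` has product in the closure of the
first `n` generators. -/
lemma wordProd_mem_closure {S : Type*} [Semigroup S] (s : ℕ → S) (n : ℕ) :
    ∀ (L : List ℕ) (m : ℕ), (∀ k ∈ m :: L, k < n) →
      wordProd s m L ∈ Subsemigroup.closure (s '' Set.Iio n) := by
  intro L
  induction L with
  | nil =>
    intro m h
    exact Subsemigroup.subset_closure ⟨m, h m (by simp), rfl⟩
  | cons a L ih =>
    intro m h
    have h1 : s m ∈ Subsemigroup.closure (s '' Set.Iio n) :=
      Subsemigroup.subset_closure ⟨m, h m (by simp), rfl⟩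
    have h2 := ih a (fun k hk => h k (by simp at hk ⊢; tauto))
    exact mul_mem h1 h2

lemma cost_ge {F : ℕ → ℝ} (hF : ∀ n, 0 ≤ F n) {k m : ℕ} {L : List ℕ}
    (hk : k ∈ m :: L) : F k ≤ wordCost F m L := by
  have hsum : 0 ≤ (L.map F).sum :=
    List.sum_nonneg (by intro x hx; obtain ⟨y, _, rfl⟩ := List.mem_map.mp hx; exact hF y)
  rcases List.mem_cons.mp hk with rfl | hk
  · exact le_add_of_nonneg_right hsum
  · have : F k ≤ (L.map F).sum :=
      List.single_le_sum (by intro x hx; obtain ⟨y, _, rfl⟩ := List.mem_map.mp hx; exact hF y)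
        _ (List.mem_map.mpr ⟨k, hk, rfl⟩)
    unfold wordCost; linarith [hF m]

/-- If each `s n` lies outside the subsemigroup generated by the previous
generators, then for any sequence `(C n)` of nonnegative reals there is
`F : ℕ → [0,∞)` with `ℓ_F(s n) > C n` for every `n`. -/
theorem exists_F_lenF_gt {S : Type*} [Semigroup S] (s : ℕ → S)
    (hgen : ∀ t : S, ∃ n L, t = wordProd s n L)
    (hind : ∀ n : ℕ, s n ∉ Subsemigroup.closure (s '' Set.Iio n))
    (C : ℕ → ℝ) (hC : ∀ n, 0 ≤ C n) :
    ∃ F : ℕ → ℝ, (∀ n, 0 ≤ F n) ∧ ∀ n : ℕ, C n < lenF s F (s n) := by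
  set F : ℕ → ℝ := fun k => 1 + (Finset.range (k + 1)).sup' (by simp) C with hFdef
  have hF0 : ∀ n, 0 ≤ F n := by
    intro n
    have : C 0 ≤ (Finset.range (n + 1)).sup' (by simp) C :=
      Finset.le_sup' C (by simp)
    have := hC 0
    simp only [hFdef]
    linarith
  have hFge : ∀ n k, n ≤ k → 1 + C n ≤ F k := by
    intro n k hnk
    have : C n ≤ (Finset.range (k + 1)).sup' (by simp) C :=
      Finset.le_sup' C (by simp; omega)
    simp only [hFdef]; linarith
  refine ⟨F, hF0, fun n => ?_⟩
  have hlb : ∀ r ∈ { r : ℝ | ∃ m L, s n = wordProd s m L ∧ r = wordCost F m L },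
      1 + C n ≤ r := by
    rintro r ⟨m, L, hprod, rfl⟩
    by_cases hall : ∀ k ∈ m :: L, k < n
    · exact absurd (hprod ▸ wordProd_mem_closure s n L m hall) (hind n)
    · push_neg at hall
      obtain ⟨k, hk, hkn⟩ := hall
      exact (hFge n k hkn).trans (cost_ge hF0 hk)
  have hne : { r : ℝ | ∃ m L, s n = wordProd s m L ∧ r = wordCost F m L }.Nonempty := by
    obtain ⟨m, L, h⟩ := hgen (s n)
    exact ⟨wordCost F m L, m, L, h, rfl⟩
  have : 1 + C n ≤ lenF s F (s n) := le_csInf hne hlb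
  linarith
end

section
/- Let S be a semigroup and s : ℕ → S a sequence whose image generates S as a semigroup, such that for each n ≥ 1 the element s_n does not lie in the subsemigroup of S generated by {s_1, …, s_{n−1}}. Let (F_k)_{k≥1} be a sequence of functions ℕ → [0,∞) that is pointwise nondecreasing in k (F_k(n) ≤ F_{k+1}(n) for all k, n) and such that ℓ_{F_k}(t) ≥ 1 for every k ≥ 1 and every t ∈ S. Then there exists a function F : ℕ → [0,∞) such that for every k ≥ 1 and every real C there exists n ≥ 1 with ℓ_F(s_n) > ℓ_{F_k}(s_n) + C. Consequently, no seminorm ‖·‖_{F_k} dominates ‖·‖_F up to a multiplicative constant. -/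
lemma wordCost_eq_sum (F : ℕ → ℝ) (n : ℕ) (L : List ℕ) :
    wordCost F n L = ((n :: L).map F).sum := by
  simp [wordCost]

section Weight

variable {F : ℕ → ℝ} (hF : ∀ n, 0 ≤ F n)
include hF

lemma wordCost_nonneg (n : ℕ) (L : List ℕ) : 0 ≤ wordCost F n L := by
  rw [wordCost_eq_sum]
  exact List.sum_nonneg (by simp only [List.mem_map]; rintro _ ⟨m, -, rfl⟩; exact hF m)

lemma le_wordCost_of_mem {m n : ℕ} {L : List ℕ} (hm : m ∈ n :: L) :
    F m ≤ wordCost F n L := by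
  rw [wordCost_eq_sum]
  exact List.single_le_sum (by simp only [List.mem_map]; rintro _ ⟨m, -, rfl⟩; exact hF m) _ (List.mem_map_of_mem hm)

lemma lenF_le_wordCost {S : Type*} [Semigroup S] (s : ℕ → S) (n : ℕ) (L : List ℕ) :
    lenF s F (wordProd s n L) ≤ wordCost F n L :=
  csInf_le ⟨0, by rintro r ⟨m, L', -, rfl⟩; exact wordCost_nonneg hF m L'⟩ ⟨n, L, rfl, rfl⟩

lemma lenF_apply_le {S : Type*} [Semigroup S] (s : ℕ → S) (n : ℕ) : lenF s F (s n) ≤ F n := by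
  simpa [wordCost, wordProd] using lenF_le_wordCost hF s n []

end Weight

section Words

variable {S : Type*} [Semigroup S] (s : ℕ → S)

lemma wordProd_mem {T : Subsemigroup S} :
    ∀ {n : ℕ} {L : List ℕ}, (∀ m ∈ n :: L, s m ∈ T) → wordProd s n L ∈ T
  | _, [], h => h _ List.mem_cons_self
  | _, _ :: _, h =>
    mul_mem (h _ List.mem_cons_self) (wordProd_mem fun m hm => h m (List.mem_cons_of_mem _ hm))

lemma le_lenF_apply {F : ℕ → ℝ} {c : ℝ} (n : ℕ)
    (h : ∀ m L, s n = wordProd s m L → c ≤ wordCost F m L) : c ≤ lenF s F (s n) :=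
  le_csInf ⟨_, n, [], rfl, rfl⟩ (by rintro r ⟨m, L, hw, rfl⟩; exact h m L hw)

lemma exists_le_mem_of_eq_wordProd (hind : ∀ n : ℕ, s n ∉ Subsemigroup.closure (s '' Set.Iio n))
    {n m : ℕ} {L : List ℕ} (hw : s n = wordProd s m L) : ∃ j ∈ m :: L, n ≤ j := by
  by_contra! h
  exact hind n (hw ▸ wordProd_mem s fun j hj => Subsemigroup.subset_closure ⟨j, h j hj, rfl⟩)

end Words

def diagonalWeight (Fk : ℕ → ℕ → ℝ) (j : ℕ) : ℝ :=
  j + ∑ i ∈ Finset.range (j + 1), Fk i i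

section Diagonal

variable {Fk : ℕ → ℕ → ℝ} (hFk : ∀ k n, 0 ≤ Fk k n)
include hFk

lemma diagonalWeight_nonneg (j : ℕ) : 0 ≤ diagonalWeight Fk j :=
  add_nonneg j.cast_nonneg (Finset.sum_nonneg fun i _ => hFk i i)

lemma add_le_diagonalWeight (hmono : ∀ k n, Fk k n ≤ Fk (k + 1) n)
    {k n j : ℕ} (hkn : k ≤ n) (hnj : n ≤ j) : n + Fk k n ≤ diagonalWeight Fk j := by
  have hdiag : Fk k n ≤ Fk n n := monotone_nat_of_le_succ (fun k => hmono k n) hkn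
  have hsum : Fk n n ≤ ∑ i ∈ Finset.range (j + 1), Fk i i :=
    Finset.single_le_sum (fun i _ => hFk i i) (Finset.mem_range.2 (Nat.lt_succ_of_le hnj))
  have hcast : (n : ℝ) ≤ j := by exact_mod_cast hnj
  unfold diagonalWeight
  linarith

end Diagonal

theorem exists_F_not_dominated_general {S : Type*} [Semigroup S] (s : ℕ → S)
    (hind : ∀ n : ℕ, s n ∉ Subsemigroup.closure (s '' Set.Iio n))
    (Fk : ℕ → ℕ → ℝ) (hFk : ∀ k n, 0 ≤ Fk k n)
    (hmono : ∀ k n, Fk k n ≤ Fk (k + 1) n) :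
    ∃ F : ℕ → ℝ, (∀ n, 0 ≤ F n) ∧
      ∀ (k : ℕ) (C : ℝ), ∃ n : ℕ, lenF s (Fk k) (s n) + C < lenF s F (s n) := by
  have hF := diagonalWeight_nonneg hFk
  refine ⟨diagonalWeight Fk, hF, fun k C => ?_⟩
  obtain ⟨n, hCn⟩ := exists_nat_gt C
  refine ⟨max k n, ?_⟩
  have hlower : (max k n : ℕ) + Fk k (max k n) ≤ lenF s (diagonalWeight Fk) (s (max k n)) :=
    le_lenF_apply s _ fun m L hw => by
      obtain ⟨j, hj, hnj⟩ := exists_le_mem_of_eq_wordProd s hind hw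
      exact (add_le_diagonalWeight hFk hmono (le_max_left k n) hnj).trans (le_wordCost_of_mem hF hj)
  have hupper := lenF_apply_le (hFk k) s (max k n)
  have hn : (n : ℝ) ≤ (max k n : ℕ) := by exact_mod_cast le_max_right k n
  linarith

/-- The diagonal argument: given a pointwise nondecreasing sequence of weight
functions `Fk` with `ℓ_{Fk k} ≥ 1` everywhere, there is a weight function `F`
such that no `ℓ_{Fk k}` dominates `ℓ_F` up to an additive constant on the
generators. -/
theorem exists_F_not_dominated {S : Type*} [Semigroup S] (s : ℕ → S)
    (hgen : ∀ t : S, ∃ n L, t = wordProd s n L)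
    (hind : ∀ n : ℕ, s n ∉ Subsemigroup.closure (s '' Set.Iio n))
    (Fk : ℕ → ℕ → ℝ) (hFk : ∀ k n, 0 ≤ Fk k n)
    (hmono : ∀ k n, Fk k n ≤ Fk (k + 1) n)
    (hone : ∀ (k : ℕ) (t : S), 1 ≤ lenF s (Fk k) t) :
    ∃ F : ℕ → ℝ, (∀ n, 0 ≤ F n) ∧
      ∀ (k : ℕ) (C : ℝ), ∃ n : ℕ, lenF s (Fk k) (s n) + C < lenF s F (s n) :=
  exists_F_not_dominated_general s hind Fk hFk hmono
end

section
/- For every real number s ≥ 0, every real r > 0 and all polynomials p, q ∈ ℂ[x], the prenorm ‖·‖_{r,s} is submultiplicative: ‖p·q‖_{r,s} ≤ ‖p‖_{r,s} · ‖q‖_{r,s}. -/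
/-- The prenorm `‖p‖_{r,s} = Σ_n |a_n| rⁿ/(n!)^s` on `ℂ[x]`
(with `(n!)^s` a real power). -/
noncomputable def pnorm (r s : ℝ) (p : Polynomial ℂ) : ℝ :=
  ∑ n ∈ p.support, ‖p.coeff n‖ * r ^ n / (n.factorial : ℝ) ^ s

/-!
`‖·‖_{r,s}` is the weighted `ℓ¹` norm of the coefficients with weight `w n = rⁿ/(n!)^s`.
Any weighted `ℓ¹` norm is subadditive, so expanding `p * q` into monomials reduces
submultiplicativity to `w (i + j) ≤ w i * w j`, which here is `i! j! ≤ (i + j)!`.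
-/

open Finset

namespace Polynomial

variable {R : Type*} [SeminormedRing R]

noncomputable def weightedNorm (w : ℕ → ℝ) (p : R[X]) : ℝ :=
  p.sum fun n a => ‖a‖ * w n

variable {w : ℕ → ℝ}

theorem weightedNorm_eq_sum_of_support_subset {p : R[X]} {s : Finset ℕ} (hs : p.support ⊆ s) :
    weightedNorm w p = ∑ n ∈ s, ‖p.coeff n‖ * w n :=
  sum_eq_of_subset _ (by simp) hs

@[simp]
theorem weightedNorm_zero : weightedNorm w (0 : R[X]) = 0 := by
  simp [weightedNorm]

theorem weightedNorm_monomial (n : ℕ) (c : R) :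
    weightedNorm w (monomial n c) = ‖c‖ * w n := by
  simp [weightedNorm_eq_sum_of_support_subset (support_monomial_subset n c)]

theorem weightedNorm_add_le (hw : ∀ n, 0 ≤ w n) (p q : R[X]) :
    weightedNorm w (p + q) ≤ weightedNorm w p + weightedNorm w q := by
  rw [weightedNorm_eq_sum_of_support_subset support_add,
    weightedNorm_eq_sum_of_support_subset (subset_union_left (s₂ := q.support)),
    weightedNorm_eq_sum_of_support_subset (subset_union_right (s₁ := p.support)),
    ← sum_add_distrib]
  gcongr with n
  rw [coeff_add, ← add_mul]
  exact mul_le_mul_of_nonneg_right (norm_add_le _ _) (hw n)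

theorem weightedNorm_sum_le (hw : ∀ n, 0 ≤ w n) {ι : Type*} (s : Finset ι) (f : ι → R[X]) :
    weightedNorm w (∑ i ∈ s, f i) ≤ ∑ i ∈ s, weightedNorm w (f i) :=
  le_sum_of_subadditive _ weightedNorm_zero.le (weightedNorm_add_le hw) s f

theorem weightedNorm_mul_le (hw : ∀ n, 0 ≤ w n) (hw_add : ∀ i j, w (i + j) ≤ w i * w j)
    (p q : R[X]) : weightedNorm w (p * q) ≤ weightedNorm w p * weightedNorm w q := by
  rw [mul_eq_sum_sum]
  calc weightedNorm w
        (∑ i ∈ p.support, ∑ j ∈ q.support, monomial (i + j) (p.coeff i * q.coeff j))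
      ≤ ∑ i ∈ p.support, ∑ j ∈ q.support,
          weightedNorm w (monomial (i + j) (p.coeff i * q.coeff j)) :=
        (weightedNorm_sum_le hw _ _).trans
          (sum_le_sum fun _ _ => weightedNorm_sum_le hw _ _)
    _ ≤ ∑ i ∈ p.support, ∑ j ∈ q.support,
          (‖p.coeff i‖ * w i) * (‖q.coeff j‖ * w j) := by
        gcongr with i _ j _
        rw [weightedNorm_monomial, mul_mul_mul_comm]
        exact mul_le_mul (norm_mul_le _ _) (hw_add i j) (hw _) (by positivity)
    _ = weightedNorm w p * weightedNorm w q := (sum_mul_sum _ _ _ _).symm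

end Polynomial

theorem rpow_div_factorial_rpow_add_le {r s : ℝ} (hr : 0 ≤ r) (hs : 0 ≤ s) (i j : ℕ) :
    r ^ (i + j) / ((i + j).factorial : ℝ) ^ s
      ≤ r ^ i / (i.factorial : ℝ) ^ s * (r ^ j / (j.factorial : ℝ) ^ s) := by
  rw [div_mul_div_comm, ← pow_add, ← Real.mul_rpow (by positivity) (by positivity)]
  gcongr
  exact_mod_cast
    Nat.le_of_dvd (Nat.factorial_pos _) (Nat.factorial_mul_factorial_dvd_factorial_add i j)

theorem pnorm_eq_weightedNorm (r s : ℝ) (p : Polynomial ℂ) :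
    pnorm r s p = p.weightedNorm (fun n => r ^ n / (n.factorial : ℝ) ^ s) := by
  simp only [pnorm, Polynomial.weightedNorm, Polynomial.sum_def, mul_div_assoc]

/-- For `s ≥ 0` and `r > 0`, the prenorm `‖·‖_{r,s}` is submultiplicative on `ℂ[x]`. -/
theorem pnorm_mul_le (s : ℝ) (hs : 0 ≤ s) (r : ℝ) (hr : 0 < r) (p q : Polynomial ℂ) :
    pnorm r s (p * q) ≤ pnorm r s p * pnorm r s q := by
  simp only [pnorm_eq_weightedNorm]
  exact Polynomial.weightedNorm_mul_le (fun n => by positivity)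
    (rpow_div_factorial_rpow_add_le hr.le hs) p q
end

section
/- Let Δ : ℂ[x] → ℂ[x] ⊗ ℂ[x] be the unique ℂ-algebra homomorphism with Δ(x) = x⊗1 + 1⊗x; equivalently, identifying ℂ[x] ⊗ ℂ[x] with the two-variable polynomial ring ℂ[x,y], Δ(p) is the polynomial p(x+y). Then for every real s ≥ 0, every real r > 0 and every polynomial p ∈ ℂ[x], writing Δ(p) = Σ_{i,j} c_{ij} x^i ⊗ x^j, one has Σ_{i,j} |c_{ij}| r^{i+j}/(i!·j!)^s ≤ ‖p‖_{2^{s+1}·r, s}. -/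
/-- The comultiplication on `ℂ[x]`: the unique `ℂ`-algebra homomorphism with
`Δ(x) = x⊗1 + 1⊗x`; identifying `ℂ[x] ⊗ ℂ[x]` with `ℂ[x][y]`, it sends `p` to
`p(x + y)`. -/
noncomputable def comulPoly (p : Polynomial ℂ) : Polynomial (Polynomial ℂ) :=
  Polynomial.aeval (Polynomial.C Polynomial.X + Polynomial.X) p

/-!
`comulPoly p = p(x + y)` is the Taylor expansion of `p` at `x`, so the coefficient of `x^i y^j`
is the `i`-th coefficient `C(i+j, j) a_{i+j}` of the `j`-th Hasse derivative of `p`. Grouping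
the terms along the antidiagonals `i + j = n`, the identity `(i+j)! = C(i+j, j) i! j!` together
with `C(i+j, j) ≤ 2^(i+j)` gives `1/(i! j!)^s ≤ 2^(ns)/(n!)^s`, and `Σ_j C(n, j) = 2^n` supplies
the remaining factor `2^n`.
-/

open Polynomial Finset
open scoped Nat

theorem Polynomial.hasseDeriv_map {R S : Type*} [Semiring R] [Semiring S] (f : R →+* S)
    (k : ℕ) (p : R[X]) : hasseDeriv k (p.map f) = (hasseDeriv k p).map f := by
  ext n
  simp only [hasseDeriv_coeff, coeff_map, map_mul, map_natCast]

theorem pnorm_eq_sum_range (r s : ℝ) (p : ℂ[X]) :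
    pnorm r s p = ∑ n ∈ range (p.natDegree + 1), ‖p.coeff n‖ * r ^ n / (n ! : ℝ) ^ s :=
  sum_over_range' p (f := fun n a => ‖a‖ * r ^ n / (n ! : ℝ) ^ s) (fun _ => by simp) _
    (Nat.lt_succ_self _)

theorem comulPoly_eq_taylor (p : ℂ[X]) : comulPoly p = taylor X (p.map C) := by
  rw [comulPoly, taylor_apply, comp, eval₂_map, add_comm]
  rfl

theorem coeff_comulPoly (p : ℂ[X]) (j : ℕ) : (comulPoly p).coeff j = hasseDeriv j p := by
  rw [comulPoly_eq_taylor, taylor_coeff, hasseDeriv_map, eval_map, eval₂_C_X]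

theorem natDegree_comulPoly (p : ℂ[X]) : (comulPoly p).natDegree = p.natDegree := by
  rw [comulPoly_eq_taylor, natDegree_taylor, natDegree_map_eq_of_injective C_injective]

theorem Nat.add_factorial_le_two_pow_mul (i j : ℕ) : (i + j)! ≤ 2 ^ (i + j) * (i ! * j !) := by
  rw [← Nat.add_choose_mul_factorial_mul_factorial, mul_assoc]
  exact Nat.mul_le_mul_right _ (Nat.choose_le_two_pow _ _)

theorem choose_div_factorial_rpow_le {s : ℝ} (hs : 0 ≤ s) (i j : ℕ) :
    ((i + j).choose j : ℝ) / ((i ! * j ! : ℝ)) ^ s ≤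
      (2 ^ s) ^ (i + j) * (i + j).choose j / ((i + j)! : ℝ) ^ s := by
  have hfac : ((i + j)! : ℝ) ^ s ≤ (2 ^ s) ^ (i + j) * (i ! * j ! : ℝ) ^ s := by
    rw [Real.rpow_pow_comm zero_le_two, ← Real.mul_rpow (by positivity) (by positivity)]
    exact Real.rpow_le_rpow (by positivity)
      (by exact_mod_cast Nat.add_factorial_le_two_pow_mul i j) hs
  calc ((i + j).choose j : ℝ) / ((i ! * j ! : ℝ)) ^ s
      = (2 ^ s) ^ (i + j) * (i + j).choose j / ((2 ^ s) ^ (i + j) * (i ! * j ! : ℝ) ^ s) :=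
        (mul_div_mul_left _ _ (by positivity)).symm
    _ ≤ (2 ^ s) ^ (i + j) * (i + j).choose j / ((i + j)! : ℝ) ^ s :=
        div_le_div_of_nonneg_left (by positivity) (by positivity) hfac

theorem sum_support_comulPoly (p : ℂ[X]) (w : ℕ → ℕ → ℝ) :
    ∑ j ∈ (comulPoly p).support, ∑ i ∈ ((comulPoly p).coeff j).support,
        ‖((comulPoly p).coeff j).coeff i‖ * w i j =
      ∑ n ∈ range (p.natDegree + 1),
        ‖p.coeff n‖ * ∑ x ∈ antidiagonal n, (n.choose x.1 : ℝ) * w x.2 x.1 := by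
  set N := p.natDegree + 1
  let term : ℕ → ℕ → ℝ := fun j i => ‖p.coeff (i + j)‖ * ((i + j).choose j * w i j)
  calc _ = ∑ j ∈ range N, ∑ i ∈ range (N - j), term j i := by
        refine (sum_over_range' _ (f := fun j (q : ℂ[X]) => ∑ i ∈ q.support, ‖q.coeff i‖ * w i j)
          (fun _ => rfl) N (by rw [natDegree_comulPoly]; omega)).trans
          (sum_congr rfl fun j hj => ?_)
        rw [coeff_comulPoly]
        refine (sum_over_range' _ (f := fun i c => ‖c‖ * w i j) (fun _ => by simp) _ ?_).trans
          (sum_congr rfl fun i _ => ?_)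
        · have := natDegree_hasseDeriv_le p j
          have := mem_range.mp hj
          omega
        · rw [hasseDeriv_coeff, norm_mul, Complex.norm_natCast]
          ring
    _ = ∑ n ∈ range N, ∑ x ∈ antidiagonal n, term x.1 x.2 := by
        rw [← sum_range_diag_flip]
        exact sum_congr rfl fun n _ => (Nat.sum_antidiagonal_eq_sum_range_succ term n).symm
    _ = _ := by
        refine sum_congr rfl fun n _ => ?_
        rw [mul_sum]
        refine sum_congr rfl fun x hx => ?_
        dsimp only [term]
        rw [add_comm x.2, mem_antidiagonal.mp hx]

theorem sum_antidiagonal_choose_mul_div_le {s r : ℝ} (hs : 0 ≤ s) (hr : 0 ≤ r) (n : ℕ) :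
    ∑ x ∈ antidiagonal n, (n.choose x.1 : ℝ) * (r ^ (x.2 + x.1) / (x.2 ! * x.1 ! : ℝ) ^ s) ≤
      ((2 : ℝ) ^ (s + 1) * r) ^ n / (n ! : ℝ) ^ s := by
  calc ∑ x ∈ antidiagonal n, (n.choose x.1 : ℝ) * (r ^ (x.2 + x.1) / (x.2 ! * x.1 ! : ℝ) ^ s)
      ≤ ∑ x ∈ antidiagonal n, r ^ n * ((2 ^ s) ^ n * n.choose x.1 / (n ! : ℝ) ^ s) := by
        refine sum_le_sum fun x hx => ?_
        rw [← mem_antidiagonal.mp hx, add_comm x.1, mul_div_left_comm]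
        exact mul_le_mul_of_nonneg_left (choose_div_factorial_rpow_le hs x.2 x.1) (by positivity)
    _ = ((2 : ℝ) ^ (s + 1) * r) ^ n / (n ! : ℝ) ^ s := by
        rw [← mul_sum, ← sum_div, ← mul_sum, Nat.sum_antidiagonal_eq_sum_range_succ_mk]
        simp only [← Nat.cast_sum, Nat.sum_range_choose]
        rw [Real.rpow_add_one two_ne_zero, mul_pow, mul_pow]
        push_cast
        ring

/-- Writing `Δ(p) = Σ_{i,j} c_{ij} x^i ⊗ x^j`, one has
`Σ_{i,j} |c_{ij}| r^{i+j}/(i!·j!)^s ≤ ‖p‖_{2^{s+1}·r, s}`. -/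
theorem comul_estimate (s : ℝ) (hs : 0 ≤ s) (r : ℝ) (hr : 0 < r) (p : Polynomial ℂ) :
    ∑ j ∈ (comulPoly p).support, ∑ i ∈ ((comulPoly p).coeff j).support,
        ‖((comulPoly p).coeff j).coeff i‖ * r ^ (i + j) /
          ((i.factorial * j.factorial : ℝ)) ^ s
      ≤ pnorm ((2 : ℝ) ^ (s + 1) * r) s p := by
  simp_rw [mul_div_assoc]
  rw [sum_support_comulPoly, pnorm_eq_sum_range]
  gcongr with n
  rw [mul_div_assoc]
  gcongr
  exact sum_antidiagonal_choose_mul_div_le hs hr.le n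
end

section
/- Let A be a complete normed (Banach) algebra over ℂ and let b, c ∈ A and α ∈ ℂ satisfy bc − cb = α·c. Then for every λ ∈ ℂ one has exp(λb) · c · exp(−λb) = e^{λα} · c, where exp is the exponential function in A defined by its power series. -/
/-!
Write `a = λb` and `μ = λα`. The relation `a c = c (a + μ)` says that `c` semiconjugates
`a + μ` to `a`, hence also every power and so `exp (a + μ)` to `exp a`. Since `μ` is central,
`exp (a + μ) = e^μ exp a`, and cancelling `exp a` against `exp (-a)` gives the claim.
-/

open NormedSpace

theorem semiconjBy_add_algebraMap_of_mul_sub_mul_eq_smul {R A : Type*} [CommRing R] [Ring A]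
    [Algebra R A] {a c : A} {μ : R} (h : a * c - c * a = μ • c) :
    SemiconjBy c (a + algebraMap R A μ) a := by
  rw [SemiconjBy, mul_add, ← Algebra.commutes, ← Algebra.smul_def, ← h, add_sub_cancel]

theorem exp_add_algebraMap {𝕂 A : Type*} [RCLike 𝕂] [NormedRing A] [NormedAlgebra 𝕂 A]
    [CompleteSpace A] (x : A) (z : 𝕂) : exp (x + algebraMap 𝕂 A z) = exp z • exp x := by
  let +nondep : NormedAlgebra ℚ A := .restrictScalars ℚ 𝕂 A
  rw [exp_add_of_commute (Algebra.commutes z x).symm, ← algebraMap_exp_comm, ← Algebra.commutes,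
    ← Algebra.smul_def]

theorem exp_mul_exp_neg {A : Type*} [NormedRing A] [NormedAlgebra ℚ A] [CompleteSpace A]
    (x : A) : exp x * exp (-x) = 1 := by
  rw [← exp_add_of_commute (Commute.refl x).neg_right, add_neg_cancel, exp_zero]

open NormedSpace in
/-- If `b·c − c·b = α·c` in a complex Banach algebra, then
`exp(λb)·c·exp(−λb) = e^{λα}·c` for every `λ ∈ ℂ`. -/
theorem exp_conj_of_comm_smul {A : Type*} [NormedRing A] [NormedAlgebra ℂ A]
    [CompleteSpace A] (b c : A) (α : ℂ) (h : b * c - c * b = α • c) (lam : ℂ) :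
    exp (lam • b) * c * exp (-(lam • b)) = Complex.exp (lam * α) • c := by
  let +nondep : NormedAlgebra ℚ A := .restrictScalars ℚ ℂ A
  have hscaled : (lam • b) * c - c * (lam • b) = (lam * α) • c := by
    rw [smul_mul_assoc, mul_smul_comm, ← smul_sub, h, smul_smul]
  have hsemiconj := (semiconjBy_add_algebraMap_of_mul_sub_mul_eq_smul hscaled).exp_right
  calc exp (lam • b) * c * exp (-(lam • b))
      = c * exp (lam • b + algebraMap ℂ A (lam * α)) * exp (-(lam • b)) := by rw [hsemiconj.eq]
    _ = Complex.exp (lam * α) • c * (exp (lam • b) * exp (-(lam • b))) := by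
        rw [exp_add_algebraMap, Complex.exp_eq_exp_ℂ, mul_smul_comm, smul_mul_assoc, smul_mul_assoc,
          mul_assoc]
    _ = Complex.exp (lam * α) • c := by rw [exp_mul_exp_neg, mul_one]
end
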